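/- arXiv:1911.07539 — 3 statements merged into one kernel-verified Lean document; each statement's English description precedes it below -/
import Mathlib

section
/- Let M be a negative definite symmetric integer matrix indexed by a finite set V. Then the inverse matrix M^{-1} exists and, if additionally the off-diagonal entries of M are nonnegative and the graph on V with edges {u,v} whenever M_{uv} > 0 is connected, every entry of -M^{-1} is strictly positive. -/
open Matrix Finset

variable {V : Type*} [Fintype V] [DecidableEq V]

/-- The rational intersection pairing associated with an integral matrix `M`. -/
noncomputable def ipair (M : Matrix V V ℤ) (x y : V → ℚ) : ℚ :=
  x ⬝ᵥ ((M.map fun n : ℤ => (n : ℚ)) *ᵥ y)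

/-- The form given by `M` is negative definite. -/
def NegDef (M : Matrix V V ℤ) : Prop :=
  ∀ x : V → ℚ, x ≠ 0 → ipair M x x < 0

/-- A rational vector has integer coordinates (i.e. lies in `L = ℤ^V`). -/
def IsIntegralVec (x : V → ℚ) : Prop := ∀ v, ∃ n : ℤ, x v = n

/-- Membership in the dual lattice `L' = {x : (x, e_v) ∈ ℤ for all v}`. -/
def InDual (M : Matrix V V ℤ) (x : V → ℚ) : Prop :=
  ∀ v, ∃ n : ℤ, ipair M x (Pi.single v 1) = n

/-- Membership in the Lipman (antinef) cone `S' = {x ∈ L' : (x, e_v) ≤ 0 ∀ v}`. -/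
def InLipman (M : Matrix V V ℤ) (x : V → ℚ) : Prop :=
  InDual M x ∧ ∀ v, ipair M x (Pi.single v 1) ≤ 0

/-- Two elements of `L'` have the same class in `H = L'/L`. -/
def SameClass (x y : V → ℚ) : Prop := IsIntegralVec (x - y)

/-- Auxiliary: a vanishing condition propagates along walks of a graph. -/
theorem walk_aux {G : SimpleGraph V} {x : V → ℚ}
    (hprop : ∀ a b, G.Adj a b → x a = 0 → x b = 0) :
    ∀ {w v : V}, G.Walk w v → x v ≠ 0 → x w ≠ 0 := by
  intro w v p hv
  induction p with
  | nil => exact hv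
  | cons hadj q ih => exact fun h => (ih hv) (hprop _ _ hadj h)

/-- a negative definite symmetric integer matrix is invertible (over `ℚ`), and if
moreover the off-diagonal entries are nonnegative and the associated graph is connected,
then every entry of `-M⁻¹` is strictly positive. -/
theorem neg_inv_entries_pos (M : Matrix V V ℤ) (hsym : M.IsSymm) (hneg : NegDef M) :
    IsUnit (M.map fun n : ℤ => (n : ℚ)).det ∧
      ((∀ u v : V, u ≠ v → 0 ≤ M u v) →
        (SimpleGraph.fromRel fun u v : V => 0 < M u v).Connected →
        ∀ u v : V, 0 < (-(M.map fun n : ℤ => (n : ℚ))⁻¹) u v) := by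
  classical
  set A := M.map fun n : ℤ => (n : ℚ) with hAdef
  have hAdet : A.det ≠ 0 := by
    intro h0
    obtain ⟨y, hy0, hy⟩ := Matrix.exists_mulVec_eq_zero_iff.mpr h0
    have h := hneg y hy0
    rw [ipair, ← hAdef, hy] at h
    simp at h
  refine ⟨isUnit_iff_ne_zero.mpr hAdet, ?_⟩
  intro hoff hconn u v
  have hoffA : ∀ w t : V, w ≠ t → 0 ≤ A w t := by
    intro w t h
    simp only [hAdef, Matrix.map_apply]
    exact_mod_cast hoff w t h
  set x : V → ℚ := fun w => -(A⁻¹ w v) with hxdef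
  have h1 : A * A⁻¹ = 1 := Matrix.mul_nonsing_inv A (isUnit_iff_ne_zero.mpr hAdet)
  have hmul : A *ᵥ x = -(Pi.single v 1) := by
    funext w
    have h2 : (A * A⁻¹) w v = (1 : Matrix V V ℚ) w v := by rw [h1]
    simp only [Matrix.mul_apply, Matrix.one_apply] at h2
    simp only [hxdef, Matrix.mulVec, dotProduct, Pi.neg_apply, mul_neg,
      Pi.single_apply, Finset.sum_neg_distrib, h2]
  -- nonnegativity of x
  have hxnn : ∀ w, 0 ≤ x w := by
    by_contra hc
    push_neg at hc
    obtain ⟨w0, hw0⟩ := hc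
    set p : V → ℚ := fun w => max (x w) 0 with hpdef
    set n : V → ℚ := fun w => max (-(x w)) 0 with hndef
    have hpn : ∀ w, 0 ≤ p w := fun w => le_max_right _ _
    have hnn : ∀ w, 0 ≤ n w := fun w => le_max_right _ _
    have hn0 : n ≠ 0 := by
      intro h
      have h2 := congrFun h w0
      simp only [hndef, Pi.zero_apply] at h2
      have h3 : (0:ℚ) < max (-(x w0)) 0 := lt_max_of_lt_left (by linarith)
      rw [h2] at h3
      exact lt_irrefl _ h3
    have hxpn : x = p - n := by
      funext w
      simp only [hpdef, hndef, Pi.sub_apply]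
      rcases le_total (x w) 0 with h | h
      · rw [max_eq_right h, max_eq_left (by linarith)]; ring
      · rw [max_eq_left h, max_eq_right (by linarith)]; ring
    have hprod : ∀ w, n w * p w = 0 := by
      intro w
      simp only [hpdef, hndef]
      rcases le_total (x w) 0 with h | h
      · rw [max_eq_right h]; ring
      · rw [max_eq_right (by linarith : -(x w) ≤ 0)]; ring
    have hAn : A *ᵥ n = A *ᵥ p - A *ᵥ x := by
      rw [hxpn, Matrix.mulVec_sub]; abel
    have key : 0 ≤ n ⬝ᵥ (A *ᵥ n) := by
      rw [hAn, dotProduct_sub]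
      have t1 : 0 ≤ n ⬝ᵥ (A *ᵥ p) := by
        rw [dotProduct]
        apply Finset.sum_nonneg
        intro w _
        rw [Matrix.mulVec, dotProduct, Finset.mul_sum]
        apply Finset.sum_nonneg
        intro t _
        by_cases hwt : w = t
        · subst hwt
          rw [show n w * (A w w * p w) = A w w * (n w * p w) by ring, hprod, mul_zero]
        · exact mul_nonneg (hnn w) (mul_nonneg (hoffA w t hwt) (hpn t))
      have t2 : n ⬝ᵥ (A *ᵥ x) ≤ 0 := by
        rw [hmul, dotProduct]
        apply Finset.sum_nonpos
        intro w _
        have hs : (-(Pi.single v 1 : V → ℚ)) w ≤ 0 := by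
          simp only [Pi.neg_apply, Pi.single_apply]
          by_cases hw : w = v <;> simp [hw]
        exact mul_nonpos_of_nonneg_of_nonpos (hnn w) hs
      linarith
    have hlt := hneg n hn0
    rw [ipair, ← hAdef] at hlt
    linarith
  -- propagation of zeros
  have hzero : ∀ w, x w = 0 → w ≠ v ∧ ∀ t, (0:ℤ) < M w t → x t = 0 := by
    intro w hw
    have hterm : ∀ t ∈ Finset.univ, 0 ≤ A w t * x t := by
      intro t _
      by_cases hwt : w = t
      · subst hwt; rw [hw, mul_zero]
      · exact mul_nonneg (hoffA w t hwt) (hxnn t)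
    have hsumnn : 0 ≤ (A *ᵥ x) w := Finset.sum_nonneg hterm
    have hval := congrFun hmul w
    simp only [Pi.neg_apply, Pi.single_apply] at hval
    have hwv : w ≠ v := by
      intro h
      rw [if_pos h] at hval
      rw [hval] at hsumnn
      linarith
    have hsum0 : (A *ᵥ x) w = 0 := by
      rw [hval, if_neg hwv, neg_zero]
    refine ⟨hwv, ?_⟩
    intro t ht
    have hz := (Finset.sum_eq_zero_iff_of_nonneg hterm).mp hsum0 t (Finset.mem_univ t)
    have hApos : 0 < A w t := by
      simp only [hAdef, Matrix.map_apply]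
      exact_mod_cast ht
    rcases mul_eq_zero.mp hz with h | h
    · exact absurd h (ne_of_gt hApos)
    · exact h
  -- connectedness: x is positive everywhere
  have hprop : ∀ a b : V, (SimpleGraph.fromRel fun s t : V => 0 < M s t).Adj a b →
      x a = 0 → x b = 0 := by
    intro a b hadj h
    rw [SimpleGraph.fromRel_adj] at hadj
    obtain ⟨hne', hrel⟩ := hadj
    rcases hrel with hr | hr
    · exact (hzero a h).2 b hr
    · refine (hzero a h).2 b ?_
      have hab : M a b = M b a := by
        conv_lhs => rw [← hsym]
        rfl
      rw [hab]; exact hr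
  have hvne : x v ≠ 0 := fun h => (hzero v h).1 rfl
  obtain ⟨pw⟩ := hconn.preconnected u v
  have hxu : x u ≠ 0 := walk_aux hprop pw hvne
  have hfin : 0 < x u := lt_of_le_of_ne (hxnn u) (Ne.symm hxu)
  simpa [hxdef] using hfin
end

section
/- Let L = Z^V with negative definite intersection matrix M having nonnegative off-diagonal entries, L' its dual lattice, H = L'/L, and S' the Lipman cone. For every class h ∈ H, the set S'_h = {s ∈ S' : [s] = h} is nonempty and has a unique minimal element s_h with respect to the coordinatewise partial order. -/
open Matrix Finset

set_option linter.unusedSectionVars false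
set_option maxHeartbeats 1000000

variable {V : Type*} [Fintype V] [DecidableEq V]

/- ### Auxiliary lemmas -/

lemma ipair_expand (M : Matrix V V ℤ) (x y : V → ℚ) :
    ipair M x y = ∑ v, ∑ w, x v * (M v w : ℚ) * y w := by
  simp [ipair, mulVec, dotProduct, Finset.mul_sum, mul_assoc]

lemma gdef (M : Matrix V V ℤ) (x : V → ℚ) (v : V) :
    ipair M x (Pi.single v 1) = ∑ w, x w * (M w v : ℚ) := by
  rw [ipair_expand]
  simp [Pi.single_apply, mul_ite]

lemma ipair_comm (M : Matrix V V ℤ) (hsym : M.IsSymm) (x y : V → ℚ) :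
    ipair M x y = ipair M y x := by
  rw [ipair_expand, ipair_expand, Finset.sum_comm]
  refine Finset.sum_congr rfl fun v _ => Finset.sum_congr rfl fun w _ => ?_
  rw [hsym.apply v w]; ring

lemma ipair_eq_sum_g (M : Matrix V V ℤ) (x y : V → ℚ) :
    ipair M x y = ∑ w, ipair M x (Pi.single w 1) * y w := by
  rw [ipair_expand, Finset.sum_comm]
  refine Finset.sum_congr rfl fun w _ => ?_
  rw [gdef, Finset.sum_mul]

lemma ipair_sub_right (M : Matrix V V ℤ) (x y z : V → ℚ) :
    ipair M x (y - z) = ipair M x y - ipair M x z := by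
  simp [ipair_expand, mul_sub, ← Finset.sum_sub_distrib]

lemma ipair_add_left (M : Matrix V V ℤ) (x y z : V → ℚ) :
    ipair M (x + y) z = ipair M x z + ipair M y z := by
  simp [ipair, add_dotProduct]

lemma ipair_smul_left (M : Matrix V V ℤ) (c : ℚ) (x z : V → ℚ) :
    ipair M (c • x) z = c * ipair M x z := by
  simp [ipair, smul_dotProduct]

/-- Any vector in the Lipman cone is (coordinatewise) nonnegative. -/
lemma antinef_nonneg (M : Matrix V V ℤ) (hsym : M.IsSymm) (hneg : NegDef M)
    (hoff : ∀ u v : V, u ≠ v → 0 ≤ M u v) (s : V → ℚ)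
    (hs : ∀ v, ipair M s (Pi.single v 1) ≤ 0) : ∀ v, 0 ≤ s v := by
  by_contra hc
  push_neg at hc
  obtain ⟨v0, hv0⟩ := hc
  set sp : V → ℚ := fun v => max (s v) 0 with hsp
  set sm : V → ℚ := fun v => max (-s v) 0 with hsm
  have hdecomp : s = sp - sm := by
    funext v; simp [hsp, hsm, max_zero_sub_max_neg_zero_eq_self]
  have hsmne : sm ≠ 0 := by
    intro h
    have := congrFun h v0
    simp [hsm] at this
    nlinarith [this]
  have h1 : ipair M s sm ≤ 0 := by
    rw [ipair_eq_sum_g]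
    refine Finset.sum_nonpos fun w _ => ?_
    exact mul_nonpos_of_nonpos_of_nonneg (hs w) (le_max_right _ _)
  have h2 : 0 ≤ ipair M sm sp := by
    rw [ipair_expand]
    refine Finset.sum_nonneg fun v _ => Finset.sum_nonneg fun w _ => ?_
    rcases eq_or_ne v w with rfl | hvw
    · rcases le_or_gt 0 (s v) with h | h
      · have : sm v = 0 := by simp [hsm]; linarith
        simp [this]
      · have : sp v = 0 := by simp [hsp]; linarith
        simp [this]
    · have := hoff v w hvw
      have h0 : (0:ℚ) ≤ (M v w : ℚ) := by exact_mod_cast this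
      have : (0:ℚ) ≤ sm v := le_max_right _ _
      positivity
  have h3 : ipair M sm sm < 0 := hneg sm hsmne
  have h4 : ipair M sm s = ipair M sm sp - ipair M sm sm := by
    rw [← ipair_sub_right, ← hdecomp]
  have h5 : ipair M sm s = ipair M s sm := ipair_comm M hsym sm s
  linarith

lemma gdef' (M : Matrix V V ℤ) (hsym : M.IsSymm) (x : V → ℚ) (v : V) :
    ipair M x (Pi.single v 1) = ((M.map fun n : ℤ => (n : ℚ)) *ᵥ x) v := by
  simp [ipair, mulVec, dotProduct, Pi.single_apply, mul_ite, Finset.mul_sum]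
  refine Finset.sum_congr rfl fun w _ => ?_
  rw [hsym.apply v w]; ring

/-- There is an integral vector `z` with `M z` a constant negative integer `-D`. -/
lemma exists_neg_vec (M : Matrix V V ℤ) (hneg : NegDef M) :
    ∃ (z : V → ℚ) (D : ℤ), 1 ≤ D ∧ (∀ v, ∃ n : ℤ, z v = n) ∧
      ∀ v, ((M.map fun n : ℤ => (n : ℚ)) *ᵥ z) v = -D := by
  set A := M.map fun n : ℤ => (n : ℚ) with hA
  have hinj : Function.Injective A.mulVecLin := by
    rw [← LinearMap.ker_eq_bot, LinearMap.ker_eq_bot']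
    intro x hx
    by_contra hxne
    have : ipair M x x < 0 := hneg x hxne
    rw [ipair] at this
    have hx' : A *ᵥ x = 0 := hx
    rw [hx'] at this
    simp at this
  have hsurj : Function.Surjective A.mulVecLin := LinearMap.injective_iff_surjective.mp hinj
  obtain ⟨y, hy⟩ := hsurj (fun _ => -1)
  set D : ℤ := ∏ v, ((y v).den : ℤ) with hD
  have hD0 : 0 < D := by
    rw [hD]
    refine Finset.prod_pos fun v _ => ?_
    exact_mod_cast (y v).den_pos
  have hD1 : 1 ≤ D := hD0
  refine ⟨fun v => (D : ℚ) * y v, D, hD1, ?_, ?_⟩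
  · intro v
    obtain ⟨k, hk⟩ : (((y v).den : ℤ)) ∣ D := Finset.dvd_prod_of_mem _ (Finset.mem_univ v)
    refine ⟨k * (y v).num, ?_⟩
    have hden : ((y v).den : ℚ) * y v = (y v).num := by
      rw [mul_comm]; exact_mod_cast Rat.mul_den_eq_num (y v)
    push_cast [hk]
    rw [mul_comm ((y v).den : ℚ) (k:ℚ), mul_assoc, hden]
  · intro v
    have : A *ᵥ (fun w => (D:ℚ) * y w) = (D:ℚ) • (A *ᵥ y) := by
      rw [← mulVec_smul]
      congr 1
    rw [this]
    have hy' : A *ᵥ y = fun _ => -1 := hy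
    rw [hy']
    simp

/-- Membership in the dual lattice passes between vectors of the same class. -/
lemma inDual_of_sameClass (M : Matrix V V ℤ) (x ℓ' : V → ℚ)
    (hx : SameClass x ℓ') (hℓ' : InDual M ℓ') : InDual M x := by
  intro v
  obtain ⟨n, hn⟩ := hℓ' v
  choose m hm using hx
  refine ⟨n + ∑ w, m w * M w v, ?_⟩
  have hx' : x = ℓ' + (x - ℓ') := by ring
  rw [hx', ipair_add_left, hn, gdef]
  push_cast
  congr 1
  refine Finset.sum_congr rfl fun w _ => ?_
  rw [← hm w]

/-- The class of `ℓ'` contains an antinef vector. -/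
lemma lipman_class_nonempty (M : Matrix V V ℤ) (hsym : M.IsSymm) (hneg : NegDef M)
    (ℓ' : V → ℚ) (hℓ' : InDual M ℓ') :
    ∃ s : V → ℚ, InLipman M s ∧ SameClass s ℓ' := by
  obtain ⟨z, D, hD1, hzint, hz⟩ := exists_neg_vec M hneg
  have hgz : ∀ v, ipair M z (Pi.single v 1) = -D := fun v => by
    rw [gdef' M hsym]; exact hz v
  choose n hn using hℓ'
  set k : ℤ := ∑ v, max (n v) 0 with hk
  have hk0 : 0 ≤ k := Finset.sum_nonneg fun v _ => le_max_right _ _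
  have hkn : ∀ v, n v ≤ k :=
    fun v => le_trans (le_max_left _ _)
      (Finset.single_le_sum (f := fun v => max (n v) 0)
        (fun i _ => le_max_right _ _) (Finset.mem_univ v))
  have key : ∀ v, ipair M (ℓ' + (k:ℚ) • z) (Pi.single v 1) = ((n v - k * D : ℤ) : ℚ) := by
    intro v
    rw [ipair_add_left, ipair_smul_left, hn, hgz]
    push_cast; ring
  have hsame : SameClass (ℓ' + (k:ℚ) • z) ℓ' := by
    intro v
    obtain ⟨mz, hmz⟩ := hzint v
    refine ⟨k * mz, ?_⟩
    simp only [Pi.sub_apply, Pi.add_apply, Pi.smul_apply, smul_eq_mul, hmz]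
    push_cast; ring
  refine ⟨ℓ' + (k:ℚ) • z, ⟨⟨fun v => ⟨n v - k * D, key v⟩, fun v => ?_⟩, hsame⟩⟩
  rw [key]
  have : n v - k * D ≤ 0 := by
    have h1 : k ≤ k * D := le_mul_of_one_le_right hk0 hD1
    have := hkn v
    omega
  exact_mod_cast this

/-- The Lipman cone within a class is closed under coordinatewise minimum. -/
lemma min_mem (M : Matrix V V ℤ) (hoff : ∀ u v : V, u ≠ v → 0 ≤ M u v)
    (ℓ' : V → ℚ) (hℓ' : InDual M ℓ') (s t : V → ℚ)
    (hs : InLipman M s ∧ SameClass s ℓ') (ht : InLipman M t ∧ SameClass t ℓ') :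
    InLipman M (fun v => min (s v) (t v)) ∧ SameClass (fun v => min (s v) (t v)) ℓ' := by
  set u : V → ℚ := fun v => min (s v) (t v) with hu
  have hsame : SameClass u ℓ' := by
    intro v
    rcases le_total (s v) (t v) with h | h
    · obtain ⟨m, hm⟩ := hs.2 v
      exact ⟨m, by simpa [hu, min_eq_left h] using hm⟩
    · obtain ⟨m, hm⟩ := ht.2 v
      exact ⟨m, by simpa [hu, min_eq_right h] using hm⟩
  refine ⟨⟨inDual_of_sameClass M u ℓ' hsame hℓ', fun v => ?_⟩, hsame⟩
  have step : ∀ (a : V → ℚ), (∀ w, u w ≤ a w) → u v = a v →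
      ipair M u (Pi.single v 1) ≤ ipair M a (Pi.single v 1) := by
    intro a hle heq
    rw [gdef, gdef]
    refine Finset.sum_le_sum fun w _ => ?_
    rcases eq_or_ne w v with rfl | hwv
    · rw [heq]
    · have h0 : (0:ℚ) ≤ (M w v : ℚ) := by exact_mod_cast hoff w v hwv
      exact mul_le_mul_of_nonneg_right (hle w) h0
  rcases le_total (s v) (t v) with h | h
  · exact le_trans (step s (fun w => min_le_left _ _) (min_eq_left h)) (hs.1.2 v)
  · exact le_trans (step t (fun w => min_le_right _ _) (min_eq_right h)) (ht.1.2 v)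

/-- for every class `h ∈ H = L'/L` (represented by some `ℓ' ∈ L'`), the set
`S'_h` of antinef cycles in the class of `ℓ'` is nonempty and has a unique minimal element
with respect to the coordinatewise partial order. -/
theorem exists_unique_min_antinef (M : Matrix V V ℤ) (hsym : M.IsSymm) (hneg : NegDef M)
    (hoff : ∀ u v : V, u ≠ v → 0 ≤ M u v)
    (hconn : (SimpleGraph.fromRel fun u v : V => 0 < M u v).Connected)
    (ℓ' : V → ℚ) (hℓ' : InDual M ℓ') :
    ∃! m : V → ℚ, (InLipman M m ∧ SameClass m ℓ') ∧
      ∀ t : V → ℚ, InLipman M t ∧ SameClass t ℓ' → ∀ v, m v ≤ t v := by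
  classical
  set P : (V → ℚ) → Prop := fun s => InLipman M s ∧ SameClass s ℓ' with hP
  have hne : ∃ s, P s := lipman_class_nonempty M hsym hneg ℓ' hℓ'
  have hnonneg : ∀ s, P s → ∀ w, 0 ≤ s w := fun s hs =>
    antinef_nonneg M hsym hneg hoff s hs.1.2
  -- per-coordinate minimizer
  have coordmin : ∀ v : V, ∃ s, P s ∧ ∀ t, P t → s v ≤ t v := by
    intro v
    set Q : ℤ → Prop := fun n => ∃ s, P s ∧ s v = ℓ' v + n with hQ
    have Hinh : ∃ n, Q n := by
      obtain ⟨s0, hs0⟩ := hne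
      obtain ⟨n0, hn0⟩ := hs0.2 v
      exact ⟨n0, s0, hs0, by have := hn0; simp at this; linarith⟩
    have Hbdd : ∃ b : ℤ, ∀ n : ℤ, Q n → b ≤ n := by
      refine ⟨⌈-ℓ' v⌉, fun n hn => ?_⟩
      obtain ⟨s, hsP, hsv⟩ := hn
      have h0 : 0 ≤ s v := hnonneg s hsP v
      rw [Int.ceil_le]
      have : -ℓ' v ≤ n := by rw [hsv] at h0; linarith
      exact_mod_cast this
    obtain ⟨lb, ⟨s, hsP, hsv⟩, hmin⟩ := Int.exists_least_of_bdd Hbdd Hinh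
    refine ⟨s, hsP, fun t htP => ?_⟩
    obtain ⟨nt, hnt⟩ := htP.2 v
    have hnt' : t v = ℓ' v + nt := by simp at hnt; linarith
    have : lb ≤ nt := hmin nt ⟨t, htP, hnt'⟩
    rw [hsv, hnt']
    have : (lb : ℚ) ≤ (nt : ℚ) := by exact_mod_cast this
    linarith
  -- minimizer over a finite set of coordinates
  have main : ∀ F : Finset V, ∃ m, P m ∧ ∀ v ∈ F, ∀ t, P t → m v ≤ t v := by
    intro F
    induction F using Finset.induction with
    | empty =>
        obtain ⟨s, hs⟩ := hne
        exact ⟨s, hs, fun v hv => absurd hv (by simp)⟩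
    | @insert v F hvF ih =>
        obtain ⟨m, hmP, hm⟩ := ih
        obtain ⟨s, hsP, hs⟩ := coordmin v
        refine ⟨fun w => min (m w) (s w), min_mem M hoff ℓ' hℓ' m s hmP hsP, ?_⟩
        intro w hw t htP
        rcases Finset.mem_insert.mp hw with rfl | hwF
        · exact le_trans (min_le_right _ _) (hs t htP)
        · exact le_trans (min_le_left _ _) (hm w hwF t htP)
  obtain ⟨m, hmP, hm⟩ := main Finset.univ
  refine ⟨m, ⟨hmP, fun t htP v => hm v (Finset.mem_univ v) t htP⟩, ?_⟩
  intro y ⟨hyP, hy⟩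
  funext v
  exact le_antisymm (hy m hmP v) (hm v (Finset.mem_univ v) y hyP)
end

section
/- With the resolution-lattice setup, for any fixed s ∈ Q^V and any h ∈ H, the set {s' ∈ S'_h : s' ≱ s} is finite. -/
open Matrix Finset

variable {V : Type*} [Fintype V] [DecidableEq V]

set_option linter.unusedSectionVars false in
lemma ipair_eq_sum (M : Matrix V V ℤ) (x y : V → ℚ) :
    ipair M x y = ∑ u, ∑ v, x u * (M u v : ℚ) * y v := by
  unfold ipair
  simp [dotProduct, mulVec, Matrix.map_apply, Finset.mul_sum, mul_assoc]

lemma ipair_single (M : Matrix V V ℤ) (x : V → ℚ) (w : V) :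
    ipair M x (Pi.single w 1) = ∑ u, x u * (M u w : ℚ) := by
  rw [ipair_eq_sum]
  refine Finset.sum_congr rfl fun u _ => ?_
  simp [Pi.single_apply, mul_ite, Finset.sum_ite_eq']

lemma diag_neg (M : Matrix V V ℤ) (hneg : NegDef M) (v : V) : (M v v : ℚ) < 0 := by
  have h := hneg (Pi.single v 1) (by
    intro h
    have := congrFun h v
    simp at this)
  rwa [ipair_single, Fintype.sum_eq_single v (fun u hu => by simp [Pi.single_apply, hu]),
    Pi.single_apply, if_pos rfl, one_mul] at h

lemma lipman_nonneg (M : Matrix V V ℤ) (hneg : NegDef M)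
    (hoff : ∀ u v : V, u ≠ v → 0 ≤ M u v) {t : V → ℚ} (ht : InLipman M t) (v : V) :
    0 ≤ t v := by
  by_contra h
  push_neg at h
  set q : V → ℚ := fun v => max (-(t v)) 0 with hq
  have hq0 : q ≠ 0 := by
    intro h0
    have := congrFun h0 v
    simp only [hq, Pi.zero_apply] at this
    have h2 : 0 < max (-(t v)) 0 := lt_max_of_lt_left (by linarith)
    rw [this] at h2
    exact lt_irrefl _ h2
  have hqnn : ∀ x, 0 ≤ q x := fun x => le_max_right _ _
  have key : ipair M q q = ipair M (fun x => max (t x) 0) q - ipair M t q := by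
    simp only [ipair_eq_sum, ← Finset.sum_sub_distrib]
    refine Finset.sum_congr rfl fun u _ => Finset.sum_congr rfl fun w _ => ?_
    have : max (t u) 0 - t u = q u := by
      rcases le_total (t u) 0 with h' | h' <;> simp [hq, max_eq_left, max_eq_right, h']
    rw [← sub_mul, ← sub_mul, this]
  have h1 : 0 ≤ ipair M (fun x => max (t x) 0) q := by
    rw [ipair_eq_sum]
    refine Finset.sum_nonneg fun u _ => Finset.sum_nonneg fun w _ => ?_
    rcases eq_or_ne u w with rfl | huw
    · rcases le_total (t u) 0 with h' | h'
      · simp [max_eq_right h']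
      · simp [hq, max_eq_right (by linarith : -(t u) ≤ 0)]
    · have := hoff u w huw
      have : (0:ℚ) ≤ (M u w : ℚ) := by exact_mod_cast this
      positivity
  have h2 : ipair M t q ≤ 0 := by
    have : ipair M t q = ∑ w, q w * ipair M t (Pi.single w 1) := by
      rw [ipair_eq_sum]
      rw [Finset.sum_comm]
      refine Finset.sum_congr rfl fun w _ => ?_
      rw [ipair_single, Finset.mul_sum]
      refine Finset.sum_congr rfl fun u _ => by ring
    rw [this]
    exact Finset.sum_nonpos fun w _ => mul_nonpos_of_nonneg_of_nonpos (hqnn w) (ht.2 w)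
  have := hneg q hq0
  linarith

lemma neighbor_bound (M : Matrix V V ℤ) (hsym : M.IsSymm) (hneg : NegDef M)
    (hoff : ∀ u v : V, u ≠ v → 0 ≤ M u v) {t : V → ℚ} (ht : InLipman M t)
    (htn : ∀ x, 0 ≤ t x) {u w : V} (hM : 0 < M u w) :
    t w ≤ (-(M u u : ℚ) / (M u w : ℚ)) * t u := by
  have hMw : (0:ℚ) < (M u w : ℚ) := by exact_mod_cast hM
  have huu := diag_neg M hneg u
  have huw : u ≠ w := by
    rintro rfl
    exact absurd hMw (not_lt.mpr huu.le)
  have hcon : ∑ x, t x * (M x u : ℚ) ≤ 0 := by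
    rw [← ipair_single]; exact ht.2 u
  have hpair : t w * (M w u : ℚ) + t u * (M u u : ℚ) ≤ ∑ x, t x * (M x u : ℚ) := by
    have hsub : ({w, u} : Finset V) ⊆ Finset.univ := Finset.subset_univ _
    have h' : ∑ x ∈ ({w, u} : Finset V), t x * (M x u : ℚ) ≤ ∑ x, t x * (M x u : ℚ) := by
      refine Finset.sum_le_sum_of_subset_of_nonneg hsub fun x _ hx => ?_
      simp only [Finset.mem_insert, Finset.mem_singleton, not_or] at hx
      have : (0:ℚ) ≤ (M x u : ℚ) := by exact_mod_cast hoff x u hx.2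
      exact mul_nonneg (htn x) this
    rwa [Finset.sum_pair (Ne.symm huw)] at h'
  have hle : t w * (M u w : ℚ) ≤ -(M u u : ℚ) * t u := by
    have hwu : (M w u : ℚ) = (M u w : ℚ) := by exact_mod_cast hsym.apply u w
    rw [hwu] at hpair
    linarith
  rw [div_mul_eq_mul_div]
  exact (le_div_iff₀ hMw).mpr hle

lemma walk_bound (M : Matrix V V ℤ) (hsym : M.IsSymm) (hneg : NegDef M)
    (hoff : ∀ u v : V, u ≠ v → 0 ≤ M u v) {v w : V}
    (p : (SimpleGraph.fromRel fun u v : V => 0 < M u v).Walk v w) :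
    ∃ C : ℚ, 0 < C ∧ ∀ t : V → ℚ, InLipman M t → (∀ x, 0 ≤ t x) → t w ≤ C * t v := by
  induction p with
  | nil => exact ⟨1, one_pos, fun t _ _ => by simp⟩
  | @cons a b c h p ih =>
    obtain ⟨C, hC, hCb⟩ := ih
    rw [SimpleGraph.fromRel_adj] at h
    have hab : 0 < M a b := by
      rcases h.2 with h' | h'
      · exact h'
      · have : M b a = M a b := hsym.apply a b
        omega
    have hD : (0:ℚ) < -(M a a : ℚ) / (M a b : ℚ) := by
      have h1 := diag_neg M hneg a
      have h2 : (0:ℚ) < (M a b : ℚ) := by exact_mod_cast hab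
      exact div_pos (by linarith) h2
    refine ⟨C * (-(M a a : ℚ) / (M a b : ℚ)), by positivity, fun t ht htn => ?_⟩
    calc t c ≤ C * t b := hCb t ht htn
    _ ≤ C * ((-(M a a : ℚ) / (M a b : ℚ)) * t a) :=
        mul_le_mul_of_nonneg_left (neighbor_bound M hsym hneg hoff ht htn hab) hC.le
    _ = C * (-(M a a : ℚ) / (M a b : ℚ)) * t a := by ring

/-- for any fixed `s ∈ ℚ^V` and any class (represented by `ℓ' ∈ L'`), the set of
antinef cycles in that class which are not coordinatewise `≥ s` is finite. -/
theorem antinef_not_ge_finite (M : Matrix V V ℤ) (hsym : M.IsSymm) (hneg : NegDef M)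
    (hoff : ∀ u v : V, u ≠ v → 0 ≤ M u v)
    (hconn : (SimpleGraph.fromRel fun u v : V => 0 < M u v).Connected)
    (ℓ' : V → ℚ) (hℓ' : InDual M ℓ') (s : V → ℚ) :
    {t : V → ℚ | InLipman M t ∧ SameClass t ℓ' ∧ ¬ ∀ v, s v ≤ t v}.Finite := by
  have key : ∀ v : V, {t : V → ℚ | InLipman M t ∧ SameClass t ℓ' ∧ t v < s v}.Finite := by
    intro v
    have hwb : ∀ w : V, ∃ C : ℚ, 0 < C ∧ ∀ t : V → ℚ, InLipman M t → (∀ x, 0 ≤ t x) →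
        t w ≤ C * t v := fun w => walk_bound M hsym hneg hoff (hconn v w).some
    choose C hCpos hCb using hwb
    set B : V → ℚ := fun w => C w * max (s v) 0 with hB
    have hsub : {t : V → ℚ | InLipman M t ∧ SameClass t ℓ' ∧ t v < s v} ⊆
        Set.pi Set.univ (fun w => (fun n : ℤ => ℓ' w + (n:ℚ)) ''
          {n : ℤ | 0 ≤ ℓ' w + (n:ℚ) ∧ ℓ' w + (n:ℚ) ≤ B w}) := by
      rintro t ⟨ht, hcl, hlt⟩ w _
      obtain ⟨n, hn⟩ := hcl w
      have htn : ∀ x, 0 ≤ t x := lipman_nonneg M hneg hoff ht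
      have htw : t w = ℓ' w + (n:ℚ) := by
        have : t w - ℓ' w = (n:ℚ) := hn
        linarith
      refine ⟨n, ⟨?_, ?_⟩, htw.symm⟩
      · rw [← htw]; exact htn w
      · rw [← htw]
        calc t w ≤ C w * t v := hCb w t ht htn
        _ ≤ C w * max (s v) 0 :=
            mul_le_mul_of_nonneg_left (le_max_of_le_left hlt.le) (hCpos w).le
    refine Set.Finite.subset (Set.Finite.pi fun w => Set.Finite.image _ ?_) hsub
    have : {n : ℤ | 0 ≤ ℓ' w + (n:ℚ) ∧ ℓ' w + (n:ℚ) ≤ B w} ⊆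
        Set.Icc ⌈-(ℓ' w)⌉ ⌊B w - ℓ' w⌋ := by
      rintro n ⟨h1, h2⟩
      exact ⟨Int.ceil_le.mpr (by linarith), Int.le_floor.mpr (by linarith)⟩
    exact (Set.finite_Icc _ _).subset this
  have hsub2 : {t : V → ℚ | InLipman M t ∧ SameClass t ℓ' ∧ ¬ ∀ v, s v ≤ t v} ⊆
      ⋃ v ∈ (Set.univ : Set V), {t : V → ℚ | InLipman M t ∧ SameClass t ℓ' ∧ t v < s v} := by
    rintro t ⟨h1, h2, h3⟩
    push_neg at h3
    obtain ⟨v, hv⟩ := h3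
    exact Set.mem_biUnion (Set.mem_univ v) ⟨h1, h2, hv⟩
  exact Set.Finite.subset (Set.Finite.biUnion Set.finite_univ fun v _ => key v) hsub2
end
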